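/- If the immediate dominator function is derived from the dominance relation on a rooted graph where all vertices are reachable, then every vertex v ≠ r has a unique immediate dominator: a dominator d ≠ v of v such that every other dominator of v distinct from v dominates d. -/

import Mathlib

/-- A directed path from `s` to `t` given as the list of visited vertices. -/
def IsPath {V : Type*} (E : V → V → Prop) (s t : V) (p : List V) : Prop :=
  p.head? = some s ∧ p.getLast? = some t ∧ p.Chain' E

/-- `t` is reachable from `s`. -/
def Reach {V : Type*} (E : V → V → Prop) (s t : V) : Prop :=
  ∃ p, IsPath E s t p

/-- `d` dominates `v` (w.r.t. root `r`): every path from `r` to `v` contains `d`. -/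
def Dom {V : Type*} (E : V → V → Prop) (r d v : V) : Prop :=
  ∀ p, IsPath E r v p → d ∈ p

/-!
The immediate dominator of `v` is the last proper dominator of `v` on any path from `r` to `v`:
if `e` is a proper dominator of `v` and `q` a path to that last one, `d`, then `q` followed by
the rest of the path is again a path to `v`, and `e` cannot lie on the rest, so it lies on `q`.
Two immediate dominators dominate each other, and dominance is antisymmetric: if `d ≠ v` dominates
`v`, then on a path to `v` cut at the first `v` it comes strictly before `v`, and the prefix ending
at `d` avoids `v`, so `v` does not dominate `d`.
-/

namespace List

variable {α : Type*} {P : α → Prop} {l : List α}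

theorem exists_eq_append_cons_first (h : ∃ x ∈ l, P x) :
    ∃ a x c, l = a ++ x :: c ∧ P x ∧ ∀ y ∈ a, ¬ P y := by
  classical
  obtain ⟨x, hx⟩ := Option.isSome_iff_exists.1 (List.find?_isSome (p := fun y => decide (P y)).2
    (by simpa using h))
  obtain ⟨hPx, a, c, rfl, ha⟩ := List.find?_eq_some_iff_append.1 hx
  exact ⟨a, x, c, rfl, by simpa using hPx, fun y hy => by simpa using ha y hy⟩

theorem exists_eq_append_cons_last (h : ∃ x ∈ l, P x) :
    ∃ a x c, l = a ++ x :: c ∧ P x ∧ ∀ y ∈ c, ¬ P y := by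
  obtain ⟨a, x, c, hl, hPx, ha⟩ := exists_eq_append_cons_first (l := l.reverse) (by simpa using h)
  refine ⟨c.reverse, x, a.reverse, ?_, hPx, by simpa using ha⟩
  simpa using congrArg List.reverse hl

end List

section Paths

variable {V : Type*} {E : V → V → Prop} {s t x : V} {p q a c : List V}

theorem isPath_append_cons_iff :
    IsPath E s t (a ++ x :: c) ↔ IsPath E s x (a ++ [x]) ∧ IsPath E x t (x :: c) := by
  have hhead : (a ++ x :: c).head? = (a ++ [x]).head? := by cases a <;> rfl
  have hlast : (a ++ x :: c).getLast? = (x :: c).getLast? := by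
    rw [List.getLast?_append, List.getLast?_cons]; simp
  have hchain : (a ++ x :: c).IsChain E ↔ (a ++ [x]).IsChain E ∧ (x :: c).IsChain E :=
    List.isChain_split
  unfold IsPath
  rw [hhead, hlast, List.getLast?_concat, List.head?_cons]
  exact ⟨fun ⟨hs, ht, hp⟩ => ⟨⟨hs, rfl, (hchain.1 hp).1⟩, rfl, ht, (hchain.1 hp).2⟩,
    fun ⟨⟨hs, _, hp₁⟩, _, ht, hp₂⟩ => ⟨hs, ht, hchain.2 ⟨hp₁, hp₂⟩⟩⟩

theorem IsPath.head_mem (hp : IsPath E s t p) : s ∈ p :=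
  List.mem_of_mem_head? hp.1

theorem IsPath.last_mem (hp : IsPath E s t p) : t ∈ p :=
  List.mem_of_getLast? hp.2.1

theorem IsPath.eq_append_singleton (hp : IsPath E s t p) : ∃ a, p = a ++ [t] :=
  List.getLast?_eq_some_iff.1 hp.2.1

theorem IsPath.append (hq : IsPath E s x q) (hp : IsPath E x t (x :: c)) :
    IsPath E s t (q ++ c) := by
  obtain ⟨a, rfl⟩ := hq.eq_append_singleton
  simpa using isPath_append_cons_iff.2 ⟨hq, hp⟩

end Paths

def IsIdom {V : Type*} (E : V → V → Prop) (r d v : V) : Prop :=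
  Dom E r d v ∧ d ≠ v ∧ ∀ e, Dom E r e v → e ≠ v → Dom E r e d

section Dominators

variable {V : Type*} {E : V → V → Prop} {r d v : V}

theorem dom_root : Dom E r r v :=
  fun _ hp => hp.head_mem

theorem Dom.antisymm (hv : Reach E r v) (hdv : Dom E r d v) (hvd : Dom E r v d) : d = v := by
  obtain ⟨p, hp⟩ := hv
  obtain ⟨a, _, c, rfl, rfl, hva⟩ :=
    List.exists_eq_append_cons_first (P := fun y => v = y) ⟨v, hp.last_mem, rfl⟩
  have hpv : IsPath E r v (a ++ [v]) := (isPath_append_cons_iff.1 hp).1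
  rcases List.mem_append.1 (hdv _ hpv) with hda | hdv_last
  · obtain ⟨a₁, a₂, rfl⟩ := List.append_of_mem hda
    have hpd : IsPath E r d (a₁ ++ [d]) :=
      (isPath_append_cons_iff (c := a₂ ++ [v]) |>.1 (by simpa using hpv)).1
    rcases List.mem_append.1 (hvd _ hpd) with hva₁ | hvd_last
    · exact absurd rfl (hva v (by simp [hva₁]))
    · exact (List.mem_singleton.1 hvd_last).symm
  · exact List.mem_singleton.1 hdv_last

theorem exists_isIdom (hv : Reach E r v) (hvr : v ≠ r) : ∃ d, IsIdom E r d v := by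
  obtain ⟨p, hp⟩ := hv
  obtain ⟨a, d, c, rfl, ⟨hd, hdv⟩, hc⟩ :=
    List.exists_eq_append_cons_last (P := fun x => Dom E r x v ∧ x ≠ v)
      ⟨r, hp.head_mem, dom_root, hvr.symm⟩
  refine ⟨d, hd, hdv, fun e he hev q hq => ?_⟩
  have hqc : IsPath E r v (q ++ c) := hq.append (isPath_append_cons_iff.1 hp).2
  exact (List.mem_append.1 (he _ hqc)).resolve_right fun hec => hc e hec ⟨he, hev⟩

theorem IsIdom.eq {d' : V} (hd : IsIdom E r d v) (hd' : IsIdom E r d' v) (hr : Reach E r d') :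
    d = d' :=
  Dom.antisymm hr (hd'.2.2 d hd.1 hd.2.1) (hd.2.2 d' hd'.1 hd'.2.1)

end Dominators

theorem idom_exists_unique_general {V : Type*} (E : V → V → Prop) (r v : V)
    (hreach : ∀ u, Reach E r u) (hvr : v ≠ r) :
    ∃! d : V, Dom E r d v ∧ d ≠ v ∧
      ∀ e, Dom E r e v → e ≠ v → Dom E r e d := by
  obtain ⟨d, hd⟩ := exists_isIdom (hreach v) hvr
  exact ⟨d, hd, fun _ hd' => IsIdom.eq hd' hd (hreach d)⟩

/-- Every non-root vertex of a finite rooted graph with all vertices reachable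
has a unique immediate dominator. -/
theorem idom_exists_unique {V : Type*} [Fintype V] (E : V → V → Prop) (r v : V)
    (hreach : ∀ u, Reach E r u) (hvr : v ≠ r) :
    ∃! d : V, Dom E r d v ∧ d ≠ v ∧
      ∀ e, Dom E r e v → e ≠ v → Dom E r e d :=
  idom_exists_unique_general E r v hreach hvr
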